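/- Let β = (β_n) be a Cantor real base and a a β-representation of some x ∈ [0,1] (i.e., a ∈ ℕ^ℕ with val_β(a) = x). Then a is the greedy β-expansion of x if and only if for all n ≥ 1, val_{β^{(n)}}(σ^n(a)) < 1, where β^{(n)} = (β_n, β_{n+1}, …) and σ is the shift operator. -/

import Mathlib

open Filter

/-- Product of the first `n+1` terms of the base sequence. -/
noncomputable def cprod (β : ℕ → ℝ) (n : ℕ) : ℝ := ∏ i ∈ Finset.range (n+1), β i

/-- A Cantor real base: all terms exceed 1 and the partial products tend to infinity. -/
def IsCantorBase (β : ℕ → ℝ) : Prop :=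
  (∀ n, 1 < β n) ∧ Tendsto (cprod β) atTop atTop

/-- Value of a real-digit sequence in a Cantor base. -/
noncomputable def valB (β : ℕ → ℝ) (a : ℕ → ℝ) : ℝ := ∑' n, a n / cprod β n

/-- Value of a natural-digit sequence in a Cantor base. -/
noncomputable def valN (β : ℕ → ℝ) (a : ℕ → ℕ) : ℝ := valB β (fun n => (a n : ℝ))

/-- Remainders of the greedy algorithm. -/
noncomputable def greedyRem (β : ℕ → ℝ) (x : ℝ) : ℕ → ℝ
  | 0 => β 0 * x - ⌊β 0 * x⌋
  | n+1 => β (n+1) * greedyRem β x n - ⌊β (n+1) * greedyRem β x n⌋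

/-- Digits of the greedy expansion. -/
noncomputable def greedy (β : ℕ → ℝ) (x : ℝ) : ℕ → ℕ
  | 0 => (⌊β 0 * x⌋).toNat
  | n+1 => (⌊β (n+1) * greedyRem β x n⌋).toNat

/-- Remainders of the quasi-greedy algorithm started at `1`:
at each step the largest digit keeping the remainder strictly positive is chosen. -/
noncomputable def qRem (β : ℕ → ℝ) : ℕ → ℝ
  | 0 => β 0 - (⌈β 0⌉ - 1)
  | n+1 => β (n+1) * qRem β n - (⌈β (n+1) * qRem β n⌉ - 1)

/-- Digits of the quasi-greedy expansion of `1`. -/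
noncomputable def quasiGreedy (β : ℕ → ℝ) : ℕ → ℕ
  | 0 => (⌈β 0⌉ - 1).toNat
  | n+1 => (⌈β (n+1) * qRem β n⌉ - 1).toNat

/-- The `n`-shifted base `β^{(n)}`. -/
def shiftBase (β : ℕ → ℝ) (n : ℕ) : ℕ → ℝ := fun k => β (n + k)

/-- The `n`-fold shift `σ^n` of a digit sequence. -/
def shiftSeq (a : ℕ → ℕ) (n : ℕ) : ℕ → ℕ := fun k => a (n + k)

/-- Strict lexicographic order on digit sequences. -/
def LexLt (a b : ℕ → ℕ) : Prop := ∃ ℓ, (∀ k, k < ℓ → a k = b k) ∧ a ℓ < b ℓ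

/-- Lexicographic order on digit sequences. -/
def LexLe (a b : ℕ → ℕ) : Prop := LexLt a b ∨ a = b

/-- The set of greedy expansions of points of `[0,1)`. -/
def Dset (β : ℕ → ℝ) : Set (ℕ → ℕ) := {a | ∃ x ∈ Set.Ico (0:ℝ) 1, a = greedy β x}

/-
Write `T n = val_{β^{(n)}}(σ^n a)`. Splitting off the first term of the series gives
`β_n T_n = a_n + T_{n+1}` with `T_0 = x` and `T_n ≥ 0`. From the previous remainder `r` the greedy
algorithm takes the digit `⌊β_n r⌋` and the remainder `fract (β_n r)`, i.e. the same recursion,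
so by induction `a` is the greedy expansion exactly when every `T_{n+1}` lies in `[0, 1)`.
-/

/-- The input `r_{n-1}` of the `n`-th greedy step, with `r_{-1} = x`. -/
noncomputable def greedyState (β : ℕ → ℝ) (x : ℝ) : ℕ → ℝ
  | 0 => x
  | n + 1 => greedyRem β x n

section Greedy

variable {β : ℕ → ℝ} {x : ℝ}

lemma greedy_eq_toNat_floor (n : ℕ) : greedy β x n = ⌊β n * greedyState β x n⌋.toNat := by
  cases n <;> rfl

lemma greedyState_succ (n : ℕ) :
    greedyState β x (n + 1) = Int.fract (β n * greedyState β x n) := by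
  cases n <;> rfl

lemma toNat_floor_natCast_add {m : ℕ} {t : ℝ} (h0 : 0 ≤ t) (h1 : t < 1) :
    ⌊(m : ℝ) + t⌋.toNat = m := by
  rw [Int.floor_natCast_add, Int.floor_eq_zero_iff.mpr ⟨h0, h1⟩, add_zero, Int.toNat_natCast]

theorem eq_greedy_iff_of_tails {a : ℕ → ℕ} {T : ℕ → ℝ} (hT0 : T 0 = x) (hT : ∀ n, 0 ≤ T n)
    (hrec : ∀ n, β n * T n = a n + T (n + 1)) :
    a = greedy β x ↔ ∀ n, T (n + 1) < 1 := by
  constructor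
  · rintro rfl
    have hstate : ∀ n, greedyState β x n = T n := by
      intro n
      induction n with
      | zero => exact hT0.symm
      | succ n ih =>
        have hfloor : (⌊β n * T n⌋ : ℝ) = greedy β x n := by
          rw [greedy_eq_toNat_floor, ih]
          exact_mod_cast (Int.toNat_of_nonneg (Int.floor_nonneg.mpr
            (by rw [hrec]; exact add_nonneg (Nat.cast_nonneg _) (hT _)))).symm
        rw [greedyState_succ, ih, ← Int.self_sub_floor, hfloor, hrec, add_sub_cancel_left]
    intro n
    rw [← hstate, greedyState_succ]
    exact Int.fract_lt_one _
  · intro hlt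
    have hstate : ∀ n, greedyState β x n = T n := by
      intro n
      induction n with
      | zero => exact hT0.symm
      | succ n ih =>
        rw [greedyState_succ, ih, hrec, Int.fract_natCast_add,
          Int.fract_eq_self.mpr ⟨hT _, hlt n⟩]
    funext n
    rw [greedy_eq_toNat_floor, hstate, hrec, toNat_floor_natCast_add (hT _) (hlt n)]

end Greedy

section Shift

variable {β : ℕ → ℝ} {a : ℕ → ℕ}

lemma shiftBase_zero (β : ℕ → ℝ) : shiftBase β 0 = β := by
  funext k; simp [shiftBase]

lemma shiftSeq_zero (a : ℕ → ℕ) : shiftSeq a 0 = a := by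
  funext k; simp [shiftSeq]

lemma shiftBase_shiftBase (β : ℕ → ℝ) (m n : ℕ) :
    shiftBase (shiftBase β m) n = shiftBase β (m + n) := by
  funext k; simp [shiftBase, add_assoc]

lemma shiftSeq_shiftSeq (a : ℕ → ℕ) (m n : ℕ) :
    shiftSeq (shiftSeq a m) n = shiftSeq a (m + n) := by
  funext k; simp [shiftSeq, add_assoc]

lemma cprod_pos (hβ : ∀ n, 0 < β n) (n : ℕ) : 0 < cprod β n :=
  Finset.prod_pos fun i _ => hβ i

lemma cprod_zero (β : ℕ → ℝ) : cprod β 0 = β 0 := by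
  simp [cprod]

lemma cprod_succ_eq_mul_shiftBase (β : ℕ → ℝ) (k : ℕ) :
    cprod β (k + 1) = β 0 * cprod (shiftBase β 1) k := by
  simp only [cprod, shiftBase]
  rw [Finset.prod_range_succ', mul_comm]
  simp [add_comm]

lemma valN_nonneg (hβ : ∀ n, 0 < β n) (a : ℕ → ℕ) : 0 ≤ valN β a :=
  tsum_nonneg fun n => div_nonneg (Nat.cast_nonneg _) (cprod_pos hβ n).le

lemma shiftSeq_one_div_cprod_shiftBase (h0 : β 0 ≠ 0) (k : ℕ) :
    (shiftSeq a 1 k : ℝ) / cprod (shiftBase β 1) k = β 0 * ((a (k + 1) : ℝ) / cprod β (k + 1)) := by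
  rw [cprod_succ_eq_mul_shiftBase, shiftSeq, add_comm 1 k]
  field_simp

lemma summable_shift_one (h0 : β 0 ≠ 0) (hsum : Summable fun n => (a n : ℝ) / cprod β n) :
    Summable fun k => (shiftSeq a 1 k : ℝ) / cprod (shiftBase β 1) k := by
  simpa only [shiftSeq_one_div_cprod_shiftBase h0] using
    ((summable_nat_add_iff 1).mpr hsum).mul_left (β 0)

lemma summable_shift (hβ : ∀ n, 0 < β n) (hsum : Summable fun n => (a n : ℝ) / cprod β n)
    (m : ℕ) : Summable fun k => (shiftSeq a m k : ℝ) / cprod (shiftBase β m) k := by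
  induction m with
  | zero => simpa [shiftSeq_zero, shiftBase_zero] using hsum
  | succ m ih =>
    rw [← shiftSeq_shiftSeq, ← shiftBase_shiftBase]
    exact summable_shift_one (hβ _).ne' ih

lemma mul_valN_eq_add_valN_shift (h0 : β 0 ≠ 0) (hsum : Summable fun n => (a n : ℝ) / cprod β n) :
    β 0 * valN β a = a 0 + valN (shiftBase β 1) (shiftSeq a 1) := by
  rw [valN, valB, hsum.tsum_eq_zero_add, valN, valB, cprod_zero, mul_add, mul_div_cancel₀ _ h0,
    ← tsum_mul_left]
  simp only [shiftSeq_one_div_cprod_shiftBase h0]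

lemma mul_valN_shift_eq (hβ : ∀ n, 0 < β n) (hsum : Summable fun n => (a n : ℝ) / cprod β n)
    (n : ℕ) : β n * valN (shiftBase β n) (shiftSeq a n)
      = a n + valN (shiftBase β (n + 1)) (shiftSeq a (n + 1)) := by
  rw [← shiftBase_shiftBase, ← shiftSeq_shiftSeq]
  exact mul_valN_eq_add_valN_shift (hβ n).ne' (summable_shift hβ hsum n)

end Shift

theorem stmt_6_general (β : ℕ → ℝ) (hβ : IsCantorBase β) (x : ℝ)
    (a : ℕ → ℕ)
    (hsum : Summable (fun n => (a n : ℝ) / cprod β n)) (hval : valN β a = x) :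
    a = greedy β x ↔ ∀ n : ℕ, 1 ≤ n → valN (shiftBase β n) (shiftSeq a n) < 1 := by
  have hpos : ∀ n, 0 < β n := fun n => one_pos.trans (hβ.1 n)
  rw [eq_greedy_iff_of_tails (T := fun n => valN (shiftBase β n) (shiftSeq a n))
    (by rwa [shiftBase_zero, shiftSeq_zero])
    (fun n => valN_nonneg (fun k => hpos (n + k)) _) (mul_valN_shift_eq hpos hsum)]
  exact ⟨fun h n hn => Nat.succ_pred_eq_of_pos hn ▸ h (n - 1), fun h n => h (n + 1) n.succ_pos⟩

theorem stmt_6 (β : ℕ → ℝ) (hβ : IsCantorBase β) (x : ℝ)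
    (hx : x ∈ Set.Icc (0:ℝ) 1) (a : ℕ → ℕ)
    (hsum : Summable (fun n => (a n : ℝ) / cprod β n)) (hval : valN β a = x) :
    a = greedy β x ↔ ∀ n : ℕ, 1 ≤ n → valN (shiftBase β n) (shiftSeq a n) < 1 :=
  stmt_6_general β hβ x a hsum hval
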